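/- arXiv:2107.05099 — 2 statements merged into one kernel-verified Lean document; each statement's English description precedes it below -/
import Mathlib

section
/- For every natural number t, every k-linear map f : U_t^{⊗n} → U_t^{⊗m} that commutes with the diagonal action of S_t (i.e., f(σ·v) = σ·f(v) for all σ ∈ S_t and v ∈ U_t^{⊗n}) is a k-linear combination of the operators T_π, where π ranges over the set partitions of Fin m ⊕ Fin n. (Fullness of Deligne's functor ψ_t, part of Theorem 4.1.) -/
/-!
Write the matrix of `f` in the basis `u_I`. Equivariance says that its `(J, I)` entry is
invariant under `σ`, and two index pairs lie in the same `S_t`-orbit exactly when the combined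
functions `Sum.elim J I` have the same kernel. So `f` is a combination of the orbit indicators
`[ker (Sum.elim J I) = π]`. Conversely the matrix of `T_π` is `∑_{π' ≥ π} [ker = π']`, and
downward induction over the finite lattice of partitions (Möbius inversion) puts every orbit
indicator in the span of the `T_π`.
-/

open scoped Classical

noncomputable section

/-- The partition operator `T_π : U_t^{⊗n} → U_t^{⊗m}` attached to a set partition `π` of
`Fin m ⊕ Fin n` (encoded as an equivalence relation, i.e. a `Setoid`). -/
def partitionMap (k : Type*) [Field k] (t m n : ℕ) (π : Setoid (Fin m ⊕ Fin n)) :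
    ((Fin n → Fin t) → k) →ₗ[k] ((Fin m → Fin t) → k) :=
  Matrix.mulVecLin (Matrix.of fun (J : Fin m → Fin t) (I : Fin n → Fin t) =>
    if ∀ x y : Fin m ⊕ Fin n, π.r x y → Sum.elim J I x = Sum.elim J I y then (1 : k) else 0)

/-- The diagonal action of `σ ∈ S_t` on `U_t^{⊗n}`:  `σ · u_I = u_{σ ∘ I}`. -/
def diagAct (k : Type*) [Field k] (t n : ℕ) (σ : Equiv.Perm (Fin t)) :
    ((Fin n → Fin t) → k) →ₗ[k] ((Fin n → Fin t) → k) :=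
  Matrix.mulVecLin (Matrix.of fun (J I : Fin n → Fin t) =>
    if (fun p => σ (I p)) = J then (1 : k) else 0)

open Finset

instance Setoid.instFinite {α : Type*} [Finite α] : Finite (Setoid α) :=
  Finite.of_injective (fun s : Setoid α => s.r)
    fun _ _ h => Setoid.ext fun x y => iff_of_eq (congrFun (congrFun h x) y)

instance Setoid.instFintype {α : Type*} [Finite α] : Fintype (Setoid α) :=
  Fintype.ofFinite _

theorem Setoid.exists_perm_comp_eq_of_ker_eq {α β : Type*} [Finite β] {K K' : α → β}
    (h : Setoid.ker K = Setoid.ker K') : ∃ σ : Equiv.Perm β, ∀ a, σ (K a) = K' a := by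
  let e : Set.range K ≃ Set.range K' :=
    (Setoid.quotientKerEquivRange K).symm.trans
      ((Quotient.congrRight fun a b => by rw [h]).trans (Setoid.quotientKerEquivRange K'))
  refine ⟨e.extendSubtype, fun a => ?_⟩
  rw [e.extendSubtype_apply_of_mem (K a) (Set.mem_range_self a)]
  have : (Setoid.quotientKerEquivRange K).symm ⟨K a, Set.mem_range_self a⟩ =
      Quotient.mk (Setoid.ker K) a :=
    (Equiv.symm_apply_eq _).mpr rfl
  simp only [e, Equiv.trans_apply, this]
  rfl

section PartitionMatrices

variable (R : Type*) [Ring R] {α β γ : Type*}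

def partitionMatrix (π : Setoid (α ⊕ β)) : Matrix (α → γ) (β → γ) R :=
  Matrix.of fun J I => if π ≤ Setoid.ker (Sum.elim J I) then 1 else 0

def orbitMatrix (π : Setoid (α ⊕ β)) : Matrix (α → γ) (β → γ) R :=
  Matrix.of fun J I => if Setoid.ker (Sum.elim J I) = π then 1 else 0

variable [Finite α] [Finite β]

theorem partitionMatrix_eq_sum_orbitMatrix (π : Setoid (α ⊕ β)) :
    (partitionMatrix R π : Matrix (α → γ) (β → γ) R) =
      ∑ π' ∈ univ.filter (π ≤ ·), orbitMatrix R π' := by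
  ext J I
  simp [partitionMatrix, orbitMatrix, Matrix.sum_apply]

theorem orbitMatrix_mem_span_partitionMatrix (π : Setoid (α ⊕ β)) :
    (orbitMatrix R π : Matrix (α → γ) (β → γ) R) ∈
      Submodule.span R (Set.range (partitionMatrix R)) := by
  induction π using WellFoundedGT.induction with
  | _ π ih =>
  have hsplit : univ.filter (π ≤ ·) = insert π (univ.filter (π < ·)) := by
    ext π'
    simp [le_iff_lt_or_eq, eq_comm, or_comm]
  have hπ : orbitMatrix R π = partitionMatrix R π -
      ∑ π' ∈ univ.filter (π < ·), (orbitMatrix R π' : Matrix (α → γ) _ R) := by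
    rw [partitionMatrix_eq_sum_orbitMatrix, hsplit, sum_insert (by simp), add_sub_cancel_right]
  rw [hπ]
  exact sub_mem (Submodule.subset_span ⟨π, rfl⟩)
    (Submodule.sum_mem _ fun π' hπ' => ih π' (mem_filter.mp hπ').2)

theorem mem_span_orbitMatrix_of_factorsThrough_ker {M : Matrix (α → γ) (β → γ) R}
    (hM : Function.FactorsThrough (fun p : (α → γ) × (β → γ) => M p.1 p.2)
      fun p => Setoid.ker (Sum.elim p.1 p.2)) :
    M ∈ Submodule.span R (Set.range (orbitMatrix R)) := by
  set c := Function.extend (fun p : (α → γ) × (β → γ) => Setoid.ker (Sum.elim p.1 p.2))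
    (fun p => M p.1 p.2) 0
  have hc : M = ∑ π, c π • orbitMatrix R π := by
    ext J I
    simp [orbitMatrix, Matrix.sum_apply, c, hM.extend_apply _ (J, I)]
  rw [hc]
  exact Submodule.sum_mem _ fun π _ => Submodule.smul_mem _ _ (Submodule.subset_span ⟨π, rfl⟩)

theorem mem_span_orbitMatrix_of_perm_invariant [Finite γ] {M : Matrix (α → γ) (β → γ) R}
    (hM : ∀ (σ : Equiv.Perm γ) J I, M (σ ∘ J) (σ ∘ I) = M J I) :
    M ∈ Submodule.span R (Set.range (orbitMatrix R)) := by
  refine mem_span_orbitMatrix_of_factorsThrough_ker R fun ⟨J, I⟩ ⟨J', I'⟩ h => ?_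
  obtain ⟨σ, hσ⟩ := Setoid.exists_perm_comp_eq_of_ker_eq h
  have hJ : σ ∘ J = J' := funext fun a => hσ (Sum.inl a)
  have hI : σ ∘ I = I' := funext fun b => hσ (Sum.inr b)
  simp only [← hJ, ← hI, hM]

end PartitionMatrices

section DiagonalAction

variable (k : Type*) [Field k] (t m n : ℕ)

theorem diagAct_apply (σ : Equiv.Perm (Fin t))
    (w : (Fin n → Fin t) → k) (J : Fin n → Fin t) :
    diagAct k t n σ w J = w (σ.symm ∘ J) := by
  have h (I : Fin n → Fin t) : (fun p => σ (I p)) = J ↔ I = σ.symm ∘ J := by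
    rw [eq_comm, eq_comm (a := I)]
    exact (Equiv.symm_comp_eq σ I J).symm
  simp [diagAct, Matrix.mulVec, dotProduct, h]

theorem toMatrix'_comp_perm_of_equivariant
    {f : ((Fin n → Fin t) → k) →ₗ[k] ((Fin m → Fin t) → k)}
    (hf : ∀ (σ : Equiv.Perm (Fin t)) (v : (Fin n → Fin t) → k),
      f (diagAct k t n σ v) = diagAct k t m σ (f v))
    (σ : Equiv.Perm (Fin t)) (J : Fin m → Fin t) (I : Fin n → Fin t) :
    LinearMap.toMatrix' f (σ ∘ J) (σ ∘ I) = LinearMap.toMatrix' f J I := by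
  have hsingle : diagAct k t n σ (Pi.single I 1) = Pi.single (σ ∘ I) 1 := by
    ext I'
    rw [diagAct_apply]
    simp [Pi.single_apply, ← Equiv.symm_comp_eq]
  simp only [LinearMap.toMatrix'_apply, ← hsingle, hf, diagAct_apply, ← Function.comp_assoc,
    Equiv.symm_comp_self, Function.id_comp]

theorem partitionMap_eq_toLin' (π : Setoid (Fin m ⊕ Fin n)) :
    partitionMap k t m n π = Matrix.toLin' (partitionMatrix k π) := by
  ext v J
  simp [partitionMap, partitionMatrix, Matrix.toLin'_apply', Setoid.le_def]

end DiagonalAction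

theorem stmt3_general (k : Type*) [Field k] (t m n : ℕ)
    (f : ((Fin n → Fin t) → k) →ₗ[k] ((Fin m → Fin t) → k))
    (hf : ∀ (σ : Equiv.Perm (Fin t)) (v : (Fin n → Fin t) → k),
      f (diagAct k t n σ v) = diagAct k t m σ (f v)) :
    f ∈ Submodule.span k
        (Set.range fun π : Setoid (Fin m ⊕ Fin n) => partitionMap k t m n π) := by
  have hM : LinearMap.toMatrix' f ∈ Submodule.span k (Set.range (partitionMatrix k)) :=
    Submodule.span_le.mpr (Set.range_subset_iff.mpr (orbitMatrix_mem_span_partitionMatrix k))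
      (mem_span_orbitMatrix_of_perm_invariant k (toMatrix'_comp_perm_of_equivariant k t m n hf))
  simp only [partitionMap_eq_toLin']
  rw [Set.range_comp', ← Matrix.toLin'_toMatrix' f]
  exact Submodule.apply_mem_span_image_of_mem_span _ hM

/-- Fullness of Deligne's functor `ψ_t`: every `k`-linear map `U_t^{⊗n} → U_t^{⊗m}` commuting
with the diagonal `S_t`-action is a `k`-linear combination of the operators `T_π`. -/
theorem stmt3 (k : Type*) [Field k] [CharZero k] (t m n : ℕ)
    (f : ((Fin n → Fin t) → k) →ₗ[k] ((Fin m → Fin t) → k))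
    (hf : ∀ (σ : Equiv.Perm (Fin t)) (v : (Fin n → Fin t) → k),
      f (diagAct k t n σ v) = diagAct k t m σ (f v)) :
    f ∈ Submodule.span k
        (Set.range fun π : Setoid (Fin m ⊕ Fin n) => partitionMap k t m n π) :=
  stmt3_general k t m n f hf
end
end

section
/- Let t ∈ ℕ. The map sending a pair (κ, n), with κ a partition of t and n ∈ ℕ, to the partition κ^{(n)} is injective: if κ and κ' are partitions of t and m, n ∈ ℕ satisfy κ^{(m)} = κ'^{(n)}, then κ = κ' and m = n. (Injectivity part of the bijection in Theorem 5.6 (Comes–Ostrik) of the paper.) -/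
noncomputable section

/-- A partition, encoded as a weakly decreasing, eventually zero function `ℕ → ℕ`
(`kap i` is the `(i+1)`-st part `κ_{i+1}`). -/
def IsPartitionFn (lam : ℕ → ℕ) : Prop :=
  Antitone lam ∧ ∃ N : ℕ, ∀ i : ℕ, N ≤ i → lam i = 0

/-- The size `|κ| = ∑ κ_i` of a partition. -/
def fnSize (lam : ℕ → ℕ) : ℕ := ∑ᶠ i, lam i

/-- `κ^{(n)} = (κ_1+1, …, κ_n+1, κ_{n+2}, κ_{n+3}, …)`: add one box to each of the first `n`
rows of the Young diagram of `κ` and delete its `(n+1)`-th row. -/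
def addRemove (kap : ℕ → ℕ) (n : ℕ) : ℕ → ℕ := fun i => if i < n then kap i + 1 else kap (i + 1)

lemma fnSize_eq_sum (lam : ℕ → ℕ) (N : ℕ) (h : ∀ i, N ≤ i → lam i = 0) :
    fnSize lam = ∑ i ∈ Finset.range N, lam i := by
  apply finsum_eq_sum_of_support_subset
  intro i hi
  simp only [Finset.coe_range, Set.mem_Iio]
  by_contra hc
  exact hi (h i (le_of_not_gt hc))

lemma size_addRemove (kap : ℕ → ℕ) (n N : ℕ) (h0 : ∀ i, N ≤ i → kap i = 0) :
    fnSize (addRemove kap n) + kap n = fnSize kap + n := by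
  set M := max n N with hM
  have hMn : n ≤ M := le_max_left _ _
  have h1 : fnSize kap = ∑ i ∈ Finset.range (M + 1), kap i :=
    fnSize_eq_sum kap (M + 1) (fun i hi => h0 i (by omega))
  have h2 : fnSize (addRemove kap n) = ∑ i ∈ Finset.range M, addRemove kap n i := by
    apply fnSize_eq_sum
    intro i hi
    simp only [addRemove, if_neg (by omega : ¬ i < n)]
    exact h0 (i + 1) (by omega)
  rw [h1, h2]
  have hsplit : ∑ i ∈ Finset.range M, addRemove kap n i
      = ∑ i ∈ Finset.range n, (kap i + 1) + ∑ i ∈ Finset.Ico n M, kap (i + 1) := by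
    rw [Finset.range_eq_Ico, ← Finset.sum_Ico_consecutive _ (Nat.zero_le n) hMn,
      ← Finset.range_eq_Ico]
    congr 1
    · exact Finset.sum_congr rfl fun i hi => by
        simp [addRemove, Finset.mem_range.mp hi]
    · exact Finset.sum_congr rfl fun i hi => by
        simp [addRemove, Nat.not_lt.mpr (Finset.mem_Ico.mp hi).1]
  have hshift : ∑ i ∈ Finset.Ico n M, kap (i + 1)
      = ∑ i ∈ Finset.Ico (n + 1) (M + 1), kap i := by
    rw [Finset.sum_Ico_eq_sum_range, Finset.sum_Ico_eq_sum_range, Nat.succ_sub_succ]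
    exact Finset.sum_congr rfl fun i _ => by rw [Nat.add_right_comm]
  have hR : ∑ i ∈ Finset.range (M + 1), kap i
      = ∑ i ∈ Finset.range n, kap i + kap n + ∑ i ∈ Finset.Ico (n + 1) (M + 1), kap i := by
    rw [Finset.range_eq_Ico, ← Finset.sum_Ico_consecutive _ (Nat.zero_le (n + 1)) (by omega),
      ← Finset.range_eq_Ico, Finset.sum_range_succ]
  rw [hsplit, hshift, hR, Finset.sum_add_distrib, Finset.sum_const, smul_eq_mul, mul_one, Finset.card_range]
  ring

/-- For `t ∈ ℕ`, the map `(κ, n) ↦ κ^{(n)}` (with `κ` a partition of `t`, `n ∈ ℕ`) is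
injective. -/
theorem stmt15 (t : ℕ) (kap kap' : ℕ → ℕ) (hk : IsPartitionFn kap) (hk' : IsPartitionFn kap')
    (hs : fnSize kap = t) (hs' : fnSize kap' = t) (m n : ℕ)
    (h : addRemove kap m = addRemove kap' n) :
    kap = kap' ∧ m = n := by
  obtain ⟨hka, N, hN⟩ := hk
  obtain ⟨hka', N', hN'⟩ := hk'
  have hsz : fnSize (addRemove kap m) + kap m = t + m := by
    rw [size_addRemove kap m N hN, hs]
  have hsz' : fnSize (addRemove kap' n) + kap' n = t + n := by
    rw [size_addRemove kap' n N' hN', hs']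
  rw [h] at hsz
  -- key equation: kap m + (t + n) = kap' n + (t + m)
  have key : kap m + n = kap' n + m := by omega
  -- rule out m ≠ n
  have hmn : ∀ (lam lam' : ℕ → ℕ) (a b : ℕ), Antitone lam → Antitone lam' →
      addRemove lam a = addRemove lam' b → lam a + b = lam' b + a → a < b → False := by
    intro lam lam' a b hla hla' heq hkey hab
    have h1 : addRemove lam a (b - 1) = addRemove lam' b (b - 1) := by rw [heq]
    simp only [addRemove, if_neg (by omega : ¬ b - 1 < a), if_pos (by omega : b - 1 < b)] at h1
    have h2 : lam b ≤ lam a := hla (by omega)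
    have h3 : lam' b ≤ lam' (b - 1) := hla' (by omega)
    have h4 : b - 1 + 1 = b := by omega
    rw [h4] at h1
    omega
  rcases lt_trichotomy m n with hlt | heq | hgt
  · exact absurd (hmn kap kap' m n hka hka' h key hlt) (fun x => x)
  · subst heq
    refine ⟨funext fun i => ?_, rfl⟩
    rcases lt_trichotomy i m with hi | hi | hi
    · have := congrFun h i
      simp only [addRemove, if_pos hi] at this
      omega
    · subst hi; omega
    · have := congrFun h (i - 1)
      simp only [addRemove, if_neg (by omega : ¬ i - 1 < m)] at this
      rwa [(by omega : i - 1 + 1 = i)] at this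
  · exact absurd (hmn kap' kap n m hka' hka h.symm key.symm hgt) (fun x => x)
end
end
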